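/- arXiv:2312.04716 — 3 statements merged into one kernel-verified Lean document; each statement's English description precedes it below -/
import Mathlib

section
/- If C is a small category with finite limits, then a functor F : C ⥤ Type is representably flat if and only if it preserves finite limits. -/
open CategoryTheory CategoryTheory.Limits

universe u

/-- For `C` small with finite limits, a functor `F : C ⥤ Type` is
representably flat iff it preserves finite limits. -/
theorem stmt13 {C : Type u} [SmallCategory C] [HasFiniteLimits C]
    (F : C ⥤ Type u) :
    RepresentablyFlat F ↔ PreservesFiniteLimits F := by
  exact preservesFiniteLimits_iff_flat F
end

section
/- For any topos Z presented as sheaves on a small site, the canonical functor ε : Z ⟶ Sh(Z) into sheaves on Z with the canonical topology is an equivalence of categories. -/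
/-!
Write `ε : C ⥤ Sh(C, J)` for Yoneda followed by sheafification, so that morphisms `ε c ⟶ X`
are the sections `X(c)`. A sieve `R` on a sheaf `X` is covering for the canonical topology as
soon as the sections of `X` whose classifying morphisms lie in `R` form a `J`-dense subpresheaf:
a compatible family on `R` with values in a sheaf `Y` is a morphism from that subpresheaf to `Y`,
which extends uniquely to `X` because the inclusion is locally bijective. This makes `ε` cover-dense, locally full, locally faithful and
cover-preserving for the canonical topology, so by the comparison lemma restriction along `ε` is a
fully faithful functor `Sh(Sh(C, J), can) ⥤ Sh(C, J)`. Precomposed with the canonical Yoneda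
functor it is isomorphic to the identity, since `Hom(ε -, X) ≅ X`; hence both are equivalences.
-/

open CategoryTheory Opposite

universe u

theorem CategoryTheory.Presieve.FamilyOfElements.Compatible.eq_comp_of_fac {D : Type*}
    [Category* D] {X Y : D} {R : Presieve X} {x : FamilyOfElements (yoneda.obj Y) R}
    (hx : x.Compatible) {W W' : D} {f : W ⟶ X} (hf : R f) {g : W' ⟶ X} (hg : R g) (a : W ⟶ W')
    (fac : f = a ≫ g) : x f hf = a ≫ x g hg := by
  simpa using hx (𝟙 _) a hf hg (by simpa using fac)

namespace CanonicalSite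

variable {C : Type u} [SmallCategory C] (J : GrothendieckTopology C)

noncomputable abbrev sheafifiedYoneda : C ⥤ Sheaf J (Type u) :=
  yoneda ⋙ presheafToSheaf J (Type u)

variable {J}

noncomputable def sheafifiedYonedaEquiv {c : C} {X : Sheaf J (Type u)} :
    ((sheafifiedYoneda J).obj c ⟶ X) ≃ X.obj.obj (op c) :=
  ((sheafificationAdjunction J (Type u)).homEquiv _ _).trans yonedaEquiv

section SheafifiedYonedaEquiv

variable {c d : C} {X Y : Sheaf J (Type u)}

lemma sheafifiedYonedaEquiv_apply (α : (sheafifiedYoneda J).obj c ⟶ X) :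
    sheafifiedYonedaEquiv α =
      α.hom.app (op c) ((toSheafify J (yoneda.obj c)).app (op c) (𝟙 c)) :=
  rfl

lemma sheafifiedYonedaEquiv_comp (α : (sheafifiedYoneda J).obj c ⟶ X) (f : X ⟶ Y) :
    sheafifiedYonedaEquiv (α ≫ f) = f.hom.app (op c) (sheafifiedYonedaEquiv α) :=
  rfl

lemma sheafifiedYonedaEquiv_naturality (α : (sheafifiedYoneda J).obj c ⟶ X) (g : d ⟶ c) :
    X.obj.map g.op (sheafifiedYonedaEquiv α) =
      sheafifiedYonedaEquiv ((sheafifiedYoneda J).map g ≫ α) := by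
  simp only [sheafifiedYonedaEquiv, Equiv.trans_apply, yonedaEquiv_naturality]
  exact congrArg yonedaEquiv (Adjunction.homEquiv_naturality_left _ _ _).symm

lemma sheafifiedYonedaEquiv_symm_toSheafify (g : d ⟶ c) :
    sheafifiedYonedaEquiv.symm ((toSheafify J (yoneda.obj c)).app (op d) g) =
      (sheafifiedYoneda J).map g := by
  rw [Equiv.symm_apply_eq, sheafifiedYonedaEquiv_apply]
  have := types_congr_hom (congr_app (toSheafify_naturality J (yoneda.map g)) (op d)) (𝟙 d)
  dsimp at this
  rwa [Category.id_comp] at this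

lemma sheafifiedYonedaEquiv_symm_app (ξ : X.obj.obj (op c)) (f : X ⟶ Y) :
    sheafifiedYonedaEquiv.symm (f.hom.app (op c) ξ) = sheafifiedYonedaEquiv.symm ξ ≫ f := by
  rw [Equiv.symm_apply_eq, sheafifiedYonedaEquiv_comp, Equiv.apply_symm_apply]

lemma sheafifiedYonedaEquiv_symm_map (ξ : X.obj.obj (op c)) (g : d ⟶ c) :
    sheafifiedYonedaEquiv.symm (X.obj.map g.op ξ) =
      (sheafifiedYoneda J).map g ≫ sheafifiedYonedaEquiv.symm ξ := by
  rw [Equiv.symm_apply_eq, ← sheafifiedYonedaEquiv_naturality, Equiv.apply_symm_apply]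

end SheafifiedYonedaEquiv

section SieveSections

variable {X : Sheaf J (Type u)}

def sieveSections (R : Sieve X) : Subfunctor X.obj where
  obj c := {ξ | R (sheafifiedYonedaEquiv.symm ξ)}
  map g ξ hξ := by
    simp only [Set.mem_preimage, Set.mem_ofPred_eq]
    rw [← g.op_unop, sheafifiedYonedaEquiv_symm_map]
    exact R.downward_closed hξ _

variable {R : Sieve X} {Y : Sheaf J (Type u)}
  {x : Presieve.FamilyOfElements (yoneda.obj Y) R.arrows}

noncomputable def familyHom (hx : x.Compatible) : (sieveSections R).toFunctor ⟶ Y.obj where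
  app c := TypeCat.ofHom fun ξ => sheafifiedYonedaEquiv (x _ ξ.2)
  naturality c d f := by
    ext ξ
    refine ((sheafifiedYonedaEquiv_naturality _ f.unop).trans (congrArg _ ?_)).symm
    exact (hx.eq_comp_of_fac _ ξ.2 _ (sheafifiedYonedaEquiv_symm_map _ _)).symm

lemma isAmalgamation_iff (hx : x.Compatible) (h : X ⟶ Y) :
    x.IsAmalgamation h ↔ (sieveSections R).ι ≫ h.hom = familyHom hx := by
  constructor
  · intro hh
    ext ⟨c⟩ ξ
    refine Eq.trans ?_ (congrArg sheafifiedYonedaEquiv (hh _ ξ.2))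
    exact (congrArg (h.hom.app (op c)) (sheafifiedYonedaEquiv.apply_symm_apply ξ.1)).symm
  · intro hh W g hg
    apply Sheaf.hom_ext
    ext ⟨c⟩ w
    have hgw : g.hom.app (op c) w ∈ (sieveSections R).obj (op c) := by
      show R _
      rw [sheafifiedYonedaEquiv_symm_app]
      exact R.downward_closed hg _
    refine (types_congr_hom (congr_app hh (op c)) ⟨_, hgw⟩).trans ?_
    refine (congrArg sheafifiedYonedaEquiv
      (hx.eq_comp_of_fac hgw hg _ (sheafifiedYonedaEquiv_symm_app _ _))).trans ?_
    rw [sheafifiedYonedaEquiv_comp, Equiv.apply_symm_apply]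
    rfl

lemma isSheafFor_of_isLocallySurjective [Presheaf.IsLocallySurjective J (sieveSections R).ι]
    (Y : Sheaf J (Type u)) : R.arrows.IsSheafFor (yoneda.obj Y) := by
  have hbij := J.W_of_isLocallyBijective (sieveSections R).ι Y.obj Y.property
  intro x hx
  obtain ⟨h, hh⟩ := hbij.2 (familyHom hx)
  refine ⟨⟨h⟩, (isAmalgamation_iff hx _).2 hh, fun h' hh' => Sheaf.hom_ext (hbij.1 ?_)⟩
  exact ((isAmalgamation_iff hx h').1 hh').trans hh.symm

lemma isLocallySurjective_sieveSections_ι_iff :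
    Presheaf.IsLocallySurjective J (sieveSections R).ι ↔
      ∀ (c : C) (ξ : X.obj.obj (op c)), (sieveSections R).sieveOfSection ξ ∈ J c := by
  rw [Presheaf.isLocallySurjective_iff_range_sheafify_eq_top', Subfunctor.range_ι, eq_top_iff]
  exact ⟨fun h c ξ => h (op c) trivial, fun h ⟨c⟩ ξ _ => h c ξ⟩

lemma isLocallySurjective_sieveSections_pullback
    [Presheaf.IsLocallySurjective J (sieveSections R).ι] {W : Sheaf J (Type u)} (f : W ⟶ X) :
    Presheaf.IsLocallySurjective J (sieveSections (R.pullback f)).ι := by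
  rw [isLocallySurjective_sieveSections_ι_iff]
  intro c ξ
  refine J.superset_covering (fun d g hg => ?_)
    ((isLocallySurjective_sieveSections_ι_iff.1 ‹_›) c (f.hom.app (op c) ξ))
  show R (_ ≫ f)
  rw [← sheafifiedYonedaEquiv_symm_app, NatTrans.naturality_apply]
  exact hg

lemma mem_canonicalTopology_of_isLocallySurjective
    [Presheaf.IsLocallySurjective J (sieveSections R).ι] :
    R ∈ Sheaf.canonicalTopology (Sheaf J (Type u)) X := by
  refine Sheaf.mem_finestTopology_of_forall_isSheafFor ?_
  rintro _ ⟨Y, rfl⟩ W f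
  have := isLocallySurjective_sieveSections_pullback (R := R) f
  exact isSheafFor_of_isLocallySurjective Y

end SieveSections

lemma mem_canonicalTopology_of_functorPullback_mem {c : C}
    {T : Sieve ((sheafifiedYoneda J).obj c)} (hT : T.functorPullback (sheafifiedYoneda J) ∈ J c) :
    T ∈ Sheaf.canonicalTopology (Sheaf J (Type u)) _ := by
  suffices Presheaf.IsLocallySurjective J (sieveSections T).ι from
    mem_canonicalTopology_of_isLocallySurjective
  rw [isLocallySurjective_sieveSections_ι_iff]
  intro d ξ
  refine J.transitive (Presheaf.imageSieve_mem J (toSheafify J (yoneda.obj c)) ξ) _ ?_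
  rintro e g ⟨u, hu⟩
  refine J.superset_covering (fun e' a ha => ?_) (J.pullback_stable u hT)
  have hu' : ((sheafifiedYoneda J).obj c).obj.map g.op ξ =
      (toSheafify J (yoneda.obj c)).app _ u := hu.symm
  show T (sheafifiedYonedaEquiv.symm _)
  rw [op_comp, Functor.map_comp_apply, hu', ← NatTrans.naturality_apply,
    sheafifiedYonedaEquiv_symm_toSheafify]
  exact ha

lemma functorPushforward_mem_canonicalTopology {c : C} {S : Sieve c} (hS : S ∈ J c) :
    S.functorPushforward (sheafifiedYoneda J) ∈ Sheaf.canonicalTopology (Sheaf J (Type u)) _ :=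
  mem_canonicalTopology_of_functorPullback_mem
    (J.superset_covering (S.le_functorPushforward_pullback _) hS)

lemma imageSieve_mem {c c' : C} (f : (sheafifiedYoneda J).obj c ⟶ (sheafifiedYoneda J).obj c') :
    (sheafifiedYoneda J).imageSieve f ∈ J c := by
  refine J.superset_covering (fun d u hu => ?_)
    (Presheaf.imageSieve_mem J (toSheafify J (yoneda.obj c')) (sheafifiedYonedaEquiv f))
  obtain ⟨l, hl⟩ := hu
  refine ⟨l, ?_⟩
  rw [← sheafifiedYonedaEquiv_symm_toSheafify, hl]
  exact (sheafifiedYonedaEquiv_symm_map _ _).trans (by rw [Equiv.symm_apply_apply])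

lemma equalizer_mem {c c' : C} {f₁ f₂ : c ⟶ c'}
    (h : (sheafifiedYoneda J).map f₁ = (sheafifiedYoneda J).map f₂) :
    Sieve.equalizer f₁ f₂ ∈ J c := by
  have hf : (toSheafify J (yoneda.obj c')).app (op c) f₁ =
      (toSheafify J (yoneda.obj c')).app (op c) f₂ := by
    apply sheafifiedYonedaEquiv.symm.injective
    rw [sheafifiedYonedaEquiv_symm_toSheafify, sheafifiedYonedaEquiv_symm_toSheafify, h]
  exact Presheaf.equalizerSieve_mem J _ _ _ hf

instance : (sheafifiedYoneda J).IsCoverDense (Sheaf.canonicalTopology (Sheaf J (Type u))) := by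
  refine ⟨fun X => ?_⟩
  suffices Presheaf.IsLocallySurjective J
      (sieveSections (Sieve.coverByImage (sheafifiedYoneda J) X)).ι from
    mem_canonicalTopology_of_isLocallySurjective
  rw [isLocallySurjective_sieveSections_ι_iff]
  exact fun c ξ => J.superset_covering (fun d g _ => Presieve.in_coverByImage _ _) (J.top_mem c)

instance : (sheafifiedYoneda J).IsLocallyFull (Sheaf.canonicalTopology (Sheaf J (Type u))) :=
  ⟨fun f => functorPushforward_mem_canonicalTopology (imageSieve_mem f)⟩

instance : (sheafifiedYoneda J).IsLocallyFaithful (Sheaf.canonicalTopology (Sheaf J (Type u))) :=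
  ⟨fun _ _ h => functorPushforward_mem_canonicalTopology (equalizer_mem h)⟩

instance : (sheafifiedYoneda J).IsContinuous J (Sheaf.canonicalTopology (Sheaf J (Type u))) :=
  Functor.IsCoverDense.isContinuous _ _ _ ⟨functorPushforward_mem_canonicalTopology⟩

noncomputable def yonedaObjCompIso (X : Sheaf J (Type u)) :
    (sheafifiedYoneda J).op ⋙ yoneda.obj X ≅ X.obj :=
  NatIso.ofComponents (fun _ => Equiv.toIso sheafifiedYonedaEquiv) fun g => by
    ext α
    exact (sheafifiedYonedaEquiv_naturality α g.unop).symm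

noncomputable def canonicalYonedaCompSheafPushforwardIso :
    (Sheaf.canonicalTopology (Sheaf J (Type u))).yoneda ⋙
      (sheafifiedYoneda J).sheafPushforwardContinuous (Type u) J
        (Sheaf.canonicalTopology (Sheaf J (Type u))) ≅ 𝟭 _ :=
  NatIso.ofComponents
    (fun X => (fullyFaithfulSheafToPresheaf J _).preimageIso (yonedaObjCompIso X)) fun f => by
      apply Sheaf.hom_ext
      ext c α
      exact sheafifiedYonedaEquiv_comp α f

end CanonicalSite

open CanonicalSite in
/-- A Grothendieck topos `Z = Sheaf J Type` is equivalent, via the canonical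
functor `ε` (Yoneda followed by sheafification), to the category of sheaves on
`Z` for the canonical topology. -/
theorem stmt17 {C : Type u} [SmallCategory C] (J : GrothendieckTopology C) :
    (GrothendieckTopology.yoneda
        (Sheaf.canonicalTopology (Sheaf J (Type u)))).IsEquivalence := by
  let restrict := (sheafifiedYoneda J).sheafPushforwardContinuous (Type u) J
    (Sheaf.canonicalTopology (Sheaf J (Type u)))
  have : restrict.IsEquivalence :=
    { essSurj := ⟨fun X => ⟨_, ⟨canonicalYonedaCompSheafPushforwardIso.app X⟩⟩⟩ }
  have : (_ ⋙ restrict).IsEquivalence :=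
    Functor.isEquivalence_of_iso canonicalYonedaCompSheafPushforwardIso.symm
  exact Functor.isEquivalence_of_comp_right _ restrict
end

section
/- Let (C, J) be a small site, Z a Grothendieck topos, and p : C ⥤ Z a continuous flat functor (sends covers to effective epimorphic families and has left-exact left Kan extension). Then the left Kan extension of p along the Yoneda embedding factors through sheafification: p̃ ≅ a ⋙ p̃', where p̃' : Sheaf J Type ⥤ Z is cocontinuous, left exact, has a right adjoint, and satisfies p ≅ ε ⋙ p̃' for ε = yoneda ⋙ a. -/
/-!
The left Kan extension `pt` is left adjoint to the restricted Yoneda functor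
`E ↦ (X ↦ (p X ⟶ E))`. For a covering sieve `S` on `X`, `pt` sends `S ↪ yoneda X` to a
monomorphism (left exactness) which is also an epimorphism (continuity of `p`, as `pt` extends
`p`), hence to an isomorphism; by adjunction the restricted Yoneda functor therefore takes values
in `J`-sheaves. So `pt` restricted to sheaves has a right adjoint, and precomposing it with
sheafification yields another left adjoint of the restricted Yoneda functor, which is therefore
isomorphic to `pt`.
-/

open CategoryTheory CategoryTheory.Limits

universe u u₂

lemma epi_of_effectiveEpiFamily_of_factors {𝒞 : Type*} [Category 𝒞] {B Y : 𝒞} (g : Y ⟶ B)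
    {I : Type*} (X : I → 𝒞) (π : ∀ i, X i ⟶ B) [EffectiveEpiFamily X π]
    (h : ∀ i, ∃ q : X i ⟶ Y, q ≫ g = π i) : Epi g where
  left_cancellation u v huv := EffectiveEpiFamily.hom_ext X π u v fun i => by
    obtain ⟨q, hq⟩ := h i
    rw [← hq, Category.assoc, Category.assoc, huv]

lemma CategoryTheory.Adjunction.bijective_comp_of_isIso_map {𝒞 𝒟 : Type*} [Category 𝒞]
    [Category 𝒟] {L : 𝒞 ⥤ 𝒟} {R : 𝒟 ⥤ 𝒞} (adj : L ⊣ R) {A B : 𝒞} (f : A ⟶ B)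
    [IsIso (L.map f)] (Z : 𝒟) :
    Function.Bijective (fun g : B ⟶ R.obj Z => f ≫ g) := by
  have : (fun g : B ⟶ R.obj Z => f ≫ g) = adj.homEquiv A Z ∘
      ((asIso (L.map f)).homCongr (Iso.refl Z)).symm ∘ (adj.homEquiv B Z).symm := by
    funext g
    simp [← Adjunction.homEquiv_naturality_left_symm]
  rw [this]
  exact (adj.homEquiv A Z).bijective.comp
    ((Equiv.bijective _).comp (adj.homEquiv B Z).symm.bijective)

def SendsCoversToEffectiveEpiFamilies {C : Type u} [SmallCategory C] (J : GrothendieckTopology C)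
    {ℰ : Type u₂} [Category.{u} ℰ] (p : C ⥤ ℰ) : Prop :=
  ∀ (X : C) (S : Sieve X), S ∈ J X →
    EffectiveEpiFamily (fun f : Σ Y : C, { g : Y ⟶ X // S g } => p.obj f.1)
      (fun f => p.map f.2.1)

section

variable {C : Type u} [SmallCategory C] {J : GrothendieckTopology C}
  {ℰ : Type u₂} [Category.{u} ℰ] [HasColimitsOfSize.{u, u} ℰ]
  {p : C ⥤ ℰ} (pt : (Cᵒᵖ ⥤ Type u) ⥤ ℰ) (α : p ⟶ yoneda ⋙ pt) [pt.IsLeftKanExtension α]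
include α

lemma isIso_of_isLeftKanExtension_yoneda : IsIso α :=
  (Functor.isPointwiseLeftKanExtensionOfIsLeftKanExtension pt α).isIso_hom

-- Mathlib's Yoneda-extension adjunction is phrased along `uliftYoneda`, so `α` is transported.
noncomputable def yonedaAdjunction : pt ⊣ Presheaf.restrictedULiftYoneda.{u} p :=
  let e : uliftYoneda.{u} ⋙ 𝟭 _ ≅ yoneda := Functor.rightUnitor _ ≪≫ uliftYonedaIsoYoneda
  have := (Functor.isLeftKanExtension_iff_postcomp₁ (𝟭 _) e α).1 inferInstance
  Presheaf.uliftYonedaAdjunction (𝟭 _ ⋙ pt)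
    (α ≫ Functor.whiskerRight e.inv pt ≫ (Functor.associator _ _ _).hom)

variable [Balanced ℰ] [pt.PreservesMonomorphisms]

lemma isIso_map_functorInclusion {X : C} (S : Sieve X)
    [EffectiveEpiFamily (fun f : Σ Y : C, { g : Y ⟶ X // S g } => p.obj f.1)
      (fun f => p.map f.2.1)] :
    IsIso (pt.map S.functorInclusion) := by
  have := isIso_of_isLeftKanExtension_yoneda pt α
  have : Epi (pt.map S.functorInclusion) :=
    epi_of_effectiveEpiFamily_of_factors _ (fun f : Σ Y : C, { g : Y ⟶ X // S g } => p.obj f.1)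
      (fun f => p.map f.2.1 ≫ α.app X)
      fun ⟨Y, f, hf⟩ => ⟨α.app Y ≫ pt.map (S.toFunctor f hf), by
        rw [Category.assoc, ← pt.map_comp]
        exact (α.naturality f).symm⟩
  exact isIso_of_mono_of_epi _

variable (hcont : SendsCoversToEffectiveEpiFamilies J p)
include hcont

lemma isSheaf_restrictedULiftYoneda_obj (Z : ℰ) :
    Presheaf.IsSheaf J ((Presheaf.restrictedULiftYoneda.{u} p).obj Z) := by
  rw [isSheaf_iff_isSheaf_of_type]
  intro X S hS
  rw [Presieve.isSheafFor_iff_yonedaSheafCondition]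
  have := hcont X S hS
  have := isIso_map_functorInclusion pt α S
  exact ((yonedaAdjunction pt α).bijective_comp_of_isIso_map S.functorInclusion Z).existsUnique

noncomputable def sheafRestrictedYoneda : ℰ ⥤ Sheaf J (Type u) :=
  ObjectProperty.lift _ (Presheaf.restrictedULiftYoneda.{u} p)
    (isSheaf_restrictedULiftYoneda_obj pt α hcont)

noncomputable def sheafYonedaAdjunction :
    sheafToPresheaf J (Type u) ⋙ pt ⊣ sheafRestrictedYoneda pt α hcont :=
  (yonedaAdjunction pt α).restrictFullyFaithful (fullyFaithfulSheafToPresheaf J _)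
    (Functor.FullyFaithful.id _) (Iso.refl _) (Iso.refl _)

end

/-- Yoneda VI: let `(C, J)` be a small site and `Z` a Grothendieck topos
(presented as sheaves on a small site `(D, K)`). Let `p : C ⥤ Z` be continuous
(covering sieves are sent to effectively epimorphic families) and flat (its
left Kan extension `pt` along the Yoneda embedding preserves finite limits).
Then `pt` factors through sheafification via a functor
`pt' : Sheaf J Type ⥤ Z` which preserves colimits and finite limits, has a
right adjoint, and satisfies `p ≅ ε ⋙ pt'` for `ε = yoneda ⋙ sheafification`. -/
theorem stmt19 {C : Type u} [SmallCategory C] (J : GrothendieckTopology C)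
    {D : Type u} [SmallCategory D] (K : GrothendieckTopology D)
    (p : C ⥤ Sheaf K (Type u))
    (hcont : ∀ (X : C) (S : Sieve X), S ∈ J X →
      EffectiveEpiFamily
        (fun f : Σ Y : C, { g : Y ⟶ X // S g } => p.obj f.1)
        (fun f => p.map f.2.1))
    (pt : (Cᵒᵖ ⥤ Type u) ⥤ Sheaf K (Type u)) (α : p ⟶ yoneda ⋙ pt)
    [pt.IsLeftKanExtension α] [PreservesFiniteLimits pt] :
    ∃ pt' : Sheaf J (Type u) ⥤ Sheaf K (Type u),
      Nonempty (pt ≅ presheafToSheaf J (Type u) ⋙ pt') ∧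
      Nonempty (PreservesColimits pt') ∧
      Nonempty (PreservesFiniteLimits pt') ∧
      pt'.IsLeftAdjoint ∧
      Nonempty (p ≅ (yoneda ⋙ presheafToSheaf J (Type u)) ⋙ pt') := by
  have : HasColimitsOfSize.{u, u} (Sheaf K (Type u)) := Sheaf.instHasColimitsOfSize
  have := isIso_of_isLeftKanExtension_yoneda pt α
  let adj := sheafYonedaAdjunction pt α hcont
  let e : pt ≅ presheafToSheaf J (Type u) ⋙ sheafToPresheaf J (Type u) ⋙ pt :=
    (yonedaAdjunction pt α).leftAdjointUniq ((sheafificationAdjunction J _).comp adj)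
  exact ⟨_, ⟨e⟩, ⟨adj.leftAdjoint_preservesColimits⟩, ⟨inferInstance⟩, adj.isLeftAdjoint,
    ⟨asIso α ≪≫ Functor.isoWhiskerLeft yoneda e ≪≫ (Functor.associator _ _ _).symm⟩⟩
end
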